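/- Let G be a graph whose non-edges are partitioned into fillable and non-fillable, such that the graph on V(G) spanned by the fillable non-edges contains no 4-cycle subgraph. Let G' be obtained from G by adding, for each edge uv of G, a new vertex w_{uv} adjacent exactly to u and v (new non-edges being non-fillable). If F is a set of fillable non-edges such that G' + F contains no induced house, then G + F contains no induced C4. -/

import Mathlib

/-- The cycle on 4 vertices. -/
def C4 : SimpleGraph (Fin 4) :=
  SimpleGraph.fromEdgeSet {s(0,1), s(1,2), s(2,3), s(3,0)}

/-- The house graph: a 4-cycle with a fifth vertex adjacent to two adjacent
cycle vertices (the complement of `P5`). -/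
def house : SimpleGraph (Fin 5) :=
  SimpleGraph.fromEdgeSet {s(0,1), s(1,2), s(2,3), s(3,0), s(0,4), s(1,4)}

/-- The graph `G'` obtained from `G` by adding, for each edge `uv` of `G`, a new
vertex `w_{uv}` adjacent exactly to `u` and `v`; the new vertices are pairwise
distinct and non-adjacent. -/
def edgeWitnessGraph {V : Type*} (G : SimpleGraph V) :
    SimpleGraph (V ⊕ {p : V × V // G.Adj p.1 p.2}) :=
  SimpleGraph.fromRel (fun x y =>
    match x, y with
    | Sum.inl a, Sum.inl b => G.Adj a b
    | Sum.inl a, Sum.inr e => a = e.1.1 ∨ a = e.1.2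
    | _, _ => False)

/-! Take an induced 4-cycle `a b c d` of `G + F`. If one of its edges, say `ab`, is an edge of `G`,
then the witness vertex `w_{ab}` sees exactly `a` and `b`, so it is the roof of an induced house
in `G' + F`. Otherwise all four edges of the cycle lie in `F`, hence are fillable, and they form
a 4-cycle of fillable non-edges. -/

open SimpleGraph

lemma C4_adj_iff {i j : Fin 4} : C4.Adj i j ↔ j = i + 1 ∨ i = j + 1 := by
  fin_cases i <;> fin_cases j <;> simp [C4]

def C4.rotate (k : Fin 4) : C4 ≃g C4 where
  toEquiv := Equiv.addLeft k
  map_rel_iff' {i j} := by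
    simp only [Equiv.coe_addLeft, C4_adj_iff, add_assoc, add_right_inj]

lemma house_adj_castSucc {i j : Fin 4} : house.Adj i.castSucc j.castSucc ↔ C4.Adj i j := by
  fin_cases i <;> fin_cases j <;> simp [house, C4]

lemma house_adj_castSucc_last {i : Fin 4} :
    house.Adj i.castSucc (Fin.last 4) ↔ i = 0 ∨ i = 1 := by
  fin_cases i <;> simp [house]

lemma fromEdgeSet_image_map_adj {α β : Type*} {f : α → β} (hf : Function.Injective f)
    {s : Set (Sym2 α)} {x y : α} :
    (fromEdgeSet (Sym2.map f '' s)).Adj (f x) (f y) ↔ (fromEdgeSet s).Adj x y := by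
  simp only [fromEdgeSet_adj, ← Sym2.map_mk, (Sym2.map.injective hf).mem_set_image, hf.ne_iff]

lemma fromEdgeSet_image_map_inl_not_adj_inr {α β : Type*} {s : Set (Sym2 α)} {u : α ⊕ β}
    {w : β} :
    ¬ (fromEdgeSet (Sym2.map Sum.inl '' s)).Adj u (Sum.inr w) := by
  rintro ⟨⟨z, -, hz⟩, -⟩
  obtain ⟨x, -, hx⟩ := Sym2.mem_map.mp (hz ▸ Sym2.mem_mk_right u (Sum.inr w))
  exact Sum.inl_ne_inr hx

section EdgeWitness

variable {V : Type*} {G : SimpleGraph V} {F : Set (Sym2 V)}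

lemma edgeWitnessGraph_sup_adj_inl_inl {x y : V} :
    (edgeWitnessGraph G ⊔ fromEdgeSet (Sym2.map Sum.inl '' F)).Adj (Sum.inl x) (Sum.inl y) ↔
      (G ⊔ fromEdgeSet F).Adj x y := by
  simp only [sup_adj, fromEdgeSet_image_map_adj Sum.inl_injective, edgeWitnessGraph, fromRel_adj,
    ne_eq, Sum.inl.injEq, G.adj_comm y x, or_self]
  exact or_congr_left (and_iff_right_of_imp G.ne_of_adj)

lemma edgeWitnessGraph_sup_adj_inl_inr {x : V} {e : {p : V × V // G.Adj p.1 p.2}} :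
    (edgeWitnessGraph G ⊔ fromEdgeSet (Sym2.map Sum.inl '' F)).Adj (Sum.inl x) (Sum.inr e) ↔
      x = e.1.1 ∨ x = e.1.2 := by
  rw [sup_adj, or_iff_left fromEdgeSet_image_map_inl_not_adj_inr]
  simp [edgeWitnessGraph, fromRel_adj]

end EdgeWitness

def houseEmbeddingOfC4Embedding {V : Type*} {G : SimpleGraph V} {F : Set (Sym2 V)}
    (f : C4 ↪g G ⊔ fromEdgeSet F) (h : G.Adj (f 0) (f 1)) :
    house ↪g edgeWitnessGraph G ⊔ fromEdgeSet (Sym2.map Sum.inl '' F) where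
  toFun := Fin.snoc (Sum.inl ∘ f) (Sum.inr ⟨(f 0, f 1), h⟩)
  inj' := Fin.snoc_injective_of_injective (Sum.inl_injective.comp f.injective)
    fun ⟨_, hi⟩ => Sum.inl_ne_inr hi
  map_rel_iff' {i j} := by
    induction i using Fin.lastCases <;> induction j using Fin.lastCases <;>
      simp only [Function.Embedding.coeFn_mk, Fin.snoc_last, Fin.snoc_castSucc,
        Function.comp_apply]
    case last.last => simp only [SimpleGraph.irrefl]
    case last.cast i =>
      rw [adj_comm, house.adj_comm, edgeWitnessGraph_sup_adj_inl_inr, house_adj_castSucc_last,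
        f.injective.eq_iff, f.injective.eq_iff]
    case cast.last i =>
      rw [edgeWitnessGraph_sup_adj_inl_inr, house_adj_castSucc_last, f.injective.eq_iff,
        f.injective.eq_iff]
    case cast.cast i j => rw [edgeWitnessGraph_sup_adj_inl_inl, f.map_adj_iff, house_adj_castSucc]

theorem house_free_gives_C4_free_general {V : Type*} (G : SimpleGraph V)
    (Fill : Set (Sym2 V))
    (hno4 : ∀ a b c d : V, a ≠ b → a ≠ c → a ≠ d → b ≠ c → b ≠ d → c ≠ d →
      ¬((SimpleGraph.fromEdgeSet Fill).Adj a b ∧ (SimpleGraph.fromEdgeSet Fill).Adj b c ∧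
        (SimpleGraph.fromEdgeSet Fill).Adj c d ∧ (SimpleGraph.fromEdgeSet Fill).Adj d a))
    (F : Set (Sym2 V)) (hF : F ⊆ Fill)
    (hfree : IsEmpty (house ↪g
      (edgeWitnessGraph G ⊔ SimpleGraph.fromEdgeSet (Sym2.map Sum.inl '' F)))) :
    IsEmpty (C4 ↪g (G ⊔ SimpleGraph.fromEdgeSet F)) := by
  refine ⟨fun f => ?_⟩
  by_cases hG : ∃ k : Fin 4, G.Adj (f k) (f (k + 1))
  · obtain ⟨k, hk⟩ := hG
    let g := f.comp (C4.rotate k).toEmbedding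
    have hg : G.Adj (g 0) (g 1) := by simpa [g, C4.rotate] using hk
    exact hfree.false (houseEmbeddingOfC4Embedding g hg)
  · push Not at hG
    have hcycle (k : Fin 4) : (G ⊔ fromEdgeSet F).Adj (f k) (f (k + 1)) :=
      f.map_adj_iff.mpr (C4_adj_iff.mpr (Or.inl rfl))
    have hFill (k : Fin 4) : (fromEdgeSet Fill).Adj (f k) (f (k + 1)) :=
      fromEdgeSet_mono hF ((hcycle k).resolve_left (hG k))
    exact hno4 _ _ _ _ (f.injective.ne (by decide)) (f.injective.ne (by decide))
      (f.injective.ne (by decide)) (f.injective.ne (by decide)) (f.injective.ne (by decide))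
      (f.injective.ne (by decide)) ⟨hFill 0, hFill 1, hFill 2, hFill 3⟩

/-- Suppose the non-edges of `G` are partitioned into fillable ones (`Fill`) and
non-fillable ones, and the graph spanned by the fillable non-edges contains no
4-cycle subgraph. If `F` is a set of fillable non-edges such that `G' + F`
contains no induced house, then `G + F` contains no induced `C4`. -/
theorem house_free_gives_C4_free {V : Type*} (G : SimpleGraph V)
    (Fill : Set (Sym2 V)) (hFill : Fill ⊆ Gᶜ.edgeSet)
    (hno4 : ∀ a b c d : V, a ≠ b → a ≠ c → a ≠ d → b ≠ c → b ≠ d → c ≠ d →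
      ¬((SimpleGraph.fromEdgeSet Fill).Adj a b ∧ (SimpleGraph.fromEdgeSet Fill).Adj b c ∧
        (SimpleGraph.fromEdgeSet Fill).Adj c d ∧ (SimpleGraph.fromEdgeSet Fill).Adj d a))
    (F : Set (Sym2 V)) (hF : F ⊆ Fill)
    (hfree : IsEmpty (house ↪g
      (edgeWitnessGraph G ⊔ SimpleGraph.fromEdgeSet (Sym2.map Sum.inl '' F)))) :
    IsEmpty (C4 ↪g (G ⊔ SimpleGraph.fromEdgeSet F)) :=
  house_free_gives_C4_free_general G Fill hno4 F hF hfree
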